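/- Under the setting of the ADMiRA least-squares step, the projected component satisfies the bound ‖P_{S_i}(V(i) − X*)‖_F ≤ δ_{3k} ‖V(i) − X*‖_F + √(1+δ_{2k}) ‖ε‖₂. -/

import Mathlib

open scoped BigOperators

noncomputable def frobInner {m n : ℕ} (X Y : Matrix (Fin m) (Fin n) ℝ) : ℝ :=
  ∑ i, ∑ j, X i j * Y i j

noncomputable def frobNorm {m n : ℕ} (X : Matrix (Fin m) (Fin n) ℝ) : ℝ :=
  Real.sqrt (frobInner X X)

/-!
Write `D = V - X*` and `W = P_{S_i} D`. Because `P_{S_i}` is an orthogonal projection,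
`‖W‖² = ⟪W, D⟫`; because `V` solves the least-squares problem on `span(S_i)`, the residual
`y - A V` is orthogonal to `A W`, so `⟪A W, A D⟫ = ⟪A W, ε⟫`. Both `W` and `D` lie in the range of
`Q`, whose elements have rank at most `3k`, and on such a subspace the RIP polarizes to
`|⟪A W, A D⟫ - ⟪W, D⟫| ≤ δ₃ ‖W‖ ‖D‖`. Altogether
`‖W‖² ≤ δ₃ ‖W‖ ‖D‖ + ‖A W‖ ‖ε‖ ≤ ‖W‖ (δ₃ ‖D‖ + √(1 + δ₂) ‖ε‖)`.
-/

open scoped RealInnerProductSpace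

section InnerProductSpace

variable {E F : Type*} [NormedAddCommGroup E] [InnerProductSpace ℝ E]
  [NormedAddCommGroup F] [InnerProductSpace ℝ F]

def IsRestrictedIsometryOn (A : E →ₗ[ℝ] F) (δ : ℝ) (S : Submodule ℝ E) : Prop :=
  ∀ x ∈ S, |‖A x‖ ^ 2 - ‖x‖ ^ 2| ≤ δ * ‖x‖ ^ 2

namespace IsRestrictedIsometryOn

variable {A : E →ₗ[ℝ] F} {δ : ℝ} {S : Submodule ℝ E} {x y : E}

theorem mul_norm_nonneg (hA : IsRestrictedIsometryOn A δ S) (hx : x ∈ S) : 0 ≤ δ * ‖x‖ := by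
  rcases (norm_nonneg x).eq_or_lt with hx0 | hx0
  · rw [← hx0, mul_zero]
  · have : 0 ≤ δ * ‖x‖ * ‖x‖ := by nlinarith [(abs_nonneg _).trans (hA x hx)]
    exact nonneg_of_mul_nonneg_left this hx0

theorem abs_inner_map_sub_inner_le_add (hA : IsRestrictedIsometryOn A δ S) (hx : x ∈ S)
    (hy : y ∈ S) : |⟪A x, A y⟫ - ⟪x, y⟫| ≤ δ / 2 * (‖x‖ ^ 2 + ‖y‖ ^ 2) := by
  have hadd := abs_le.1 (hA _ (S.add_mem hx hy))
  have hsub := abs_le.1 (hA _ (S.sub_mem hx hy))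
  rw [map_add, norm_add_sq_real, norm_add_sq_real] at hadd
  rw [map_sub, norm_sub_sq_real, norm_sub_sq_real] at hsub
  rw [abs_le]
  constructor <;> linarith

theorem abs_inner_map_sub_inner_le (hA : IsRestrictedIsometryOn A δ S) (hx : x ∈ S)
    (hy : y ∈ S) : |⟪A x, A y⟫ - ⟪x, y⟫| ≤ δ * ‖x‖ * ‖y‖ := by
  rcases (mul_nonneg (norm_nonneg x) (norm_nonneg y)).eq_or_lt with hxy | hxy
  · obtain rfl | rfl : x = 0 ∨ y = 0 := by simpa using hxy.symm
    all_goals simp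
  -- after rescaling both vectors have norm `‖x‖ * ‖y‖`, where `δ / 2 * (‖u‖² + ‖v‖²) = δ ‖u‖ ‖v‖`
  have h := hA.abs_inner_map_sub_inner_le_add (S.smul_mem ‖y‖ hx) (S.smul_mem ‖x‖ hy)
  simp only [map_smul, real_inner_smul_left, real_inner_smul_right, norm_smul, norm_norm] at h
  refine le_of_mul_le_mul_left ?_ hxy
  calc ‖x‖ * ‖y‖ * |⟪A x, A y⟫ - ⟪x, y⟫|
      = |‖x‖ * (‖y‖ * ⟪A x, A y⟫) - ‖x‖ * (‖y‖ * ⟪x, y⟫)| := by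
        rw [← mul_sub, ← mul_sub, abs_mul, abs_mul, abs_norm, abs_norm]; ring
    _ ≤ δ / 2 * ((‖y‖ * ‖x‖) ^ 2 + (‖x‖ * ‖y‖) ^ 2) := h
    _ = ‖x‖ * ‖y‖ * (δ * ‖x‖ * ‖y‖) := by ring

end IsRestrictedIsometryOn

theorem real_inner_sub_map_eq_zero_of_forall_norm_le (A : E →ₗ[ℝ] F) {S : Submodule ℝ E}
    {y : F} {v w : E} (hv : v ∈ S) (hmin : ∀ z ∈ S, ‖y - A v‖ ≤ ‖y - A z‖) (hw : w ∈ S) :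
    ⟪y - A v, A w⟫ = 0 := by
  refine ((S.map A).norm_eq_iInf_iff_real_inner_eq_zero (Submodule.mem_map_of_mem hv)).1 ?_
    _ (Submodule.mem_map_of_mem hw)
  have hbdd : BddBelow (Set.range fun w : (S.map A : Set F) ↦ ‖y - w‖) :=
    ⟨0, by rintro _ ⟨w, rfl⟩; exact norm_nonneg _⟩
  refine le_antisymm (le_ciInf ?_) (ciInf_le hbdd ⟨A v, Submodule.mem_map_of_mem hv⟩)
  rintro ⟨_, z, hz, rfl⟩
  exact hmin z hz

theorem LinearMap.IsSymmetricProjection.norm_apply_sq {P : E →ₗ[ℝ] E}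
    (hP : P.IsSymmetricProjection) (x : E) : ‖P x‖ ^ 2 = ⟪P x, x⟫ := by
  rw [← real_inner_self_eq_norm_sq, hP.isSymmetric, ← Module.End.mul_apply,
    hP.isIdempotentElem.eq, real_inner_comm]

open LinearMap in
theorem norm_projection_sub_le_of_isRestrictedIsometryOn {A : E →ₗ[ℝ] F} {P : E →ₗ[ℝ] E}
    (hP : P.IsSymmetricProjection) {T : Submodule ℝ E} (hPT : range P ≤ T) {δ₂ δ₃ : ℝ}
    (hA₂ : ∀ x ∈ range P, ‖A x‖ ^ 2 ≤ (1 + δ₂) * ‖x‖ ^ 2)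
    (hA₃ : IsRestrictedIsometryOn A δ₃ T) {x v : E} {ε y : F} (hx : x ∈ T) (hy : y = A x + ε)
    (hv : v ∈ range P) (hmin : ∀ z ∈ range P, ‖y - A v‖ ≤ ‖y - A z‖) :
    ‖P (v - x)‖ ≤ δ₃ * ‖v - x‖ + √(1 + δ₂) * ‖ε‖ := by
  set D := v - x
  set W := P D
  have hW : W ∈ range P := mem_range_self P D
  have hD : D ∈ T := T.sub_mem (hPT hv) hx
  have hAW : ‖A W‖ ≤ √(1 + δ₂) * ‖W‖ := by
    rw [← Real.sqrt_sq (norm_nonneg W), ← Real.sqrt_mul' _ (sq_nonneg _)]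
    exact Real.le_sqrt_of_sq_le (hA₂ W hW)
  have hAD : ⟪A W, A D⟫ = ⟪A W, ε⟫ := by
    have hres : A D = ε - (y - A v) := by rw [map_sub, hy]; abel
    rw [hres, inner_sub_right, real_inner_comm (y - A v),
      real_inner_sub_map_eq_zero_of_forall_norm_le A hv hmin hW, sub_zero]
  have hWD : ‖W‖ ^ 2 ≤ ‖W‖ * (δ₃ * ‖D‖ + √(1 + δ₂) * ‖ε‖) := calc
    ‖W‖ ^ 2 = ⟪W, D⟫ := hP.norm_apply_sq D
    _ ≤ ⟪A W, A D⟫ + δ₃ * ‖W‖ * ‖D‖ := by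
      linarith [(abs_le.1 (hA₃.abs_inner_map_sub_inner_le (hPT hW) hD)).1]
    _ ≤ ‖A W‖ * ‖ε‖ + δ₃ * ‖W‖ * ‖D‖ := by rw [hAD]; gcongr; exact real_inner_le_norm _ _
    _ ≤ √(1 + δ₂) * ‖W‖ * ‖ε‖ + δ₃ * ‖W‖ * ‖D‖ := by gcongr
    _ = ‖W‖ * (δ₃ * ‖D‖ + √(1 + δ₂) * ‖ε‖) := by ring
  have hR : 0 ≤ δ₃ * ‖D‖ + √(1 + δ₂) * ‖ε‖ := add_nonneg (hA₃.mul_norm_nonneg hD) (by positivity)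
  nlinarith

end InnerProductSpace

-- Only a local instance: Mathlib deliberately puts no global norm on `Matrix`.
noncomputable abbrev frobInnerCore (m n : ℕ) :
    InnerProductSpace.Core ℝ (Matrix (Fin m) (Fin n) ℝ) where
  inner := frobInner
  conj_inner_symm X Y := by simp [frobInner, mul_comm]
  re_inner_nonneg X := by
    rw [RCLike.re_to_real]
    exact Finset.sum_nonneg fun i _ ↦ Finset.sum_nonneg fun j _ ↦ mul_self_nonneg (X i j)
  add_left X Y Z := by simp [frobInner, add_mul, Finset.sum_add_distrib]
  smul_left X Y r := by simp [frobInner, Finset.mul_sum, mul_assoc]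
  definite X h := by
    ext i j
    have hrows := (Fintype.sum_eq_zero_iff_of_nonneg fun i ↦
      Finset.sum_nonneg fun j _ ↦ mul_self_nonneg (X i j)).1 h
    have hrow := (Fintype.sum_eq_zero_iff_of_nonneg fun j ↦ mul_self_nonneg (X i j)).1
      (congrFun hrows i)
    simpa using congrFun hrow j

noncomputable abbrev frobNormedAddCommGroup (m n : ℕ) :
    NormedAddCommGroup (Matrix (Fin m) (Fin n) ℝ) :=
  @InnerProductSpace.Core.toNormedAddCommGroup ℝ _ _ _ _ (frobInnerCore m n)

noncomputable abbrev frobInnerProductSpace (m n : ℕ) :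
    @InnerProductSpace ℝ (Matrix (Fin m) (Fin n) ℝ) _
      (frobNormedAddCommGroup m n).toSeminormedAddCommGroup :=
  InnerProductSpace.ofCore _

attribute [local instance] frobInnerCore frobNormedAddCommGroup frobInnerProductSpace

theorem frobNorm_eq_norm {m n : ℕ} (X : Matrix (Fin m) (Fin n) ℝ) : frobNorm X = ‖X‖ :=
  rfl

theorem admira_projected_component_bound_general {m n p k : ℕ}
    (δ₂ δ₃ : ℝ)
    (A : Matrix (Fin m) (Fin n) ℝ →ₗ[ℝ] EuclideanSpace ℝ (Fin p))
    (hRIP2 : ∀ X : Matrix (Fin m) (Fin n) ℝ, X.rank ≤ 2 * k →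
      (1 - δ₂) * frobNorm X ^ 2 ≤ ‖A X‖ ^ 2 ∧ ‖A X‖ ^ 2 ≤ (1 + δ₂) * frobNorm X ^ 2)
    (hRIP3 : ∀ X : Matrix (Fin m) (Fin n) ℝ, X.rank ≤ 3 * k →
      (1 - δ₃) * frobNorm X ^ 2 ≤ ‖A X‖ ^ 2 ∧ ‖A X‖ ^ 2 ≤ (1 + δ₃) * frobNorm X ^ 2)
    (Xstar : Matrix (Fin m) (Fin n) ℝ)
    (ε y : EuclideanSpace ℝ (Fin p)) (hy : y = A Xstar + ε)
    -- projection onto span(S_i), a subspace of rank-≤2k matrices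
    (PSi : Matrix (Fin m) (Fin n) ℝ →ₗ[ℝ] Matrix (Fin m) (Fin n) ℝ)
    (hPSi_idem : ∀ X, PSi (PSi X) = PSi X)
    (hPSi_sa : ∀ X Y, frobInner (PSi X) Y = frobInner X (PSi Y))
    (hPSi_rank : ∀ X, (PSi X).rank ≤ 2 * k)
    -- projection onto span(S_i ∪ X*), of rank at most 3k
    (Q : Matrix (Fin m) (Fin n) ℝ →ₗ[ℝ] Matrix (Fin m) (Fin n) ℝ)
    (hQ_rank : ∀ X, (Q X).rank ≤ 3 * k)
    (hQ_PSi : ∀ X, Q (PSi X) = PSi X)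
    (hQ_Xstar : Q Xstar = Xstar)
    -- V minimizes the data error over span(S_i)
    (V : Matrix (Fin m) (Fin n) ℝ) (hV_mem : PSi V = V)
    (hV_min : ∀ Z : Matrix (Fin m) (Fin n) ℝ, PSi Z = Z →
      ‖y - A V‖ ≤ ‖y - A Z‖) :
    frobNorm (PSi (V - Xstar)) ≤
      δ₃ * frobNorm (V - Xstar) + Real.sqrt (1 + δ₂) * ‖ε‖ := by
  have hP : PSi.IsSymmetricProjection := ⟨LinearMap.ext hPSi_idem, hPSi_sa⟩
  have hPQ : LinearMap.range PSi ≤ LinearMap.range Q := by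
    rintro _ ⟨X, rfl⟩
    exact ⟨PSi X, hQ_PSi X⟩
  have hA₂ : ∀ X ∈ LinearMap.range PSi, ‖A X‖ ^ 2 ≤ (1 + δ₂) * ‖X‖ ^ 2 := by
    rintro _ ⟨X, rfl⟩
    exact (hRIP2 _ (hPSi_rank X)).2
  have hA₃ : IsRestrictedIsometryOn A δ₃ (LinearMap.range Q) := by
    rintro _ ⟨X, rfl⟩
    obtain ⟨hlow, hup⟩ := hRIP3 _ (hQ_rank X)
    rw [← frobNorm_eq_norm, abs_le]
    constructor <;> linarith
  simp only [frobNorm_eq_norm]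
  refine norm_projection_sub_le_of_isRestrictedIsometryOn hP hPQ hA₂ hA₃ ⟨Xstar, hQ_Xstar⟩ hy
    ⟨V, hV_mem⟩ ?_
  rintro _ ⟨Z, rfl⟩
  exact hV_min _ (hPSi_idem Z)

/-- ADMiRA least-squares step, projected component (equation (59)):
`‖P_{Si}(V − X*)‖_F ≤ δ₃ ‖V − X*‖_F + √(1+δ₂) ‖ε‖₂`. -/
theorem admira_projected_component_bound {m n p k : ℕ}
    (δ₂ δ₃ : ℝ)
    (A : Matrix (Fin m) (Fin n) ℝ →ₗ[ℝ] EuclideanSpace ℝ (Fin p))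
    (Astar : EuclideanSpace ℝ (Fin p) →ₗ[ℝ] Matrix (Fin m) (Fin n) ℝ)
    (hadj : ∀ (X : Matrix (Fin m) (Fin n) ℝ) (v : EuclideanSpace ℝ (Fin p)),
      (inner ℝ (A X) v : ℝ) = frobInner X (Astar v))
    (hRIP2 : ∀ X : Matrix (Fin m) (Fin n) ℝ, X.rank ≤ 2 * k →
      (1 - δ₂) * frobNorm X ^ 2 ≤ ‖A X‖ ^ 2 ∧ ‖A X‖ ^ 2 ≤ (1 + δ₂) * frobNorm X ^ 2)
    (hRIP3 : ∀ X : Matrix (Fin m) (Fin n) ℝ, X.rank ≤ 3 * k →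
      (1 - δ₃) * frobNorm X ^ 2 ≤ ‖A X‖ ^ 2 ∧ ‖A X‖ ^ 2 ≤ (1 + δ₃) * frobNorm X ^ 2)
    (Xstar : Matrix (Fin m) (Fin n) ℝ) (hXstar : Xstar.rank ≤ k)
    (ε y : EuclideanSpace ℝ (Fin p)) (hy : y = A Xstar + ε)
    -- projection onto span(S_i), a subspace of rank-≤2k matrices
    (PSi : Matrix (Fin m) (Fin n) ℝ →ₗ[ℝ] Matrix (Fin m) (Fin n) ℝ)
    (hPSi_idem : ∀ X, PSi (PSi X) = PSi X)
    (hPSi_sa : ∀ X Y, frobInner (PSi X) Y = frobInner X (PSi Y))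
    (hPSi_rank : ∀ X, (PSi X).rank ≤ 2 * k)
    -- projection onto span(S_i ∪ X*), of rank at most 3k
    (Q : Matrix (Fin m) (Fin n) ℝ →ₗ[ℝ] Matrix (Fin m) (Fin n) ℝ)
    (hQ_idem : ∀ X, Q (Q X) = Q X)
    (hQ_sa : ∀ X Y, frobInner (Q X) Y = frobInner X (Q Y))
    (hQ_rank : ∀ X, (Q X).rank ≤ 3 * k)
    (hQ_PSi : ∀ X, Q (PSi X) = PSi X)
    (hQ_Xstar : Q Xstar = Xstar)
    -- V minimizes the data error over span(S_i)
    (V : Matrix (Fin m) (Fin n) ℝ) (hV_mem : PSi V = V)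
    (hV_min : ∀ Z : Matrix (Fin m) (Fin n) ℝ, PSi Z = Z →
      ‖y - A V‖ ≤ ‖y - A Z‖) :
    frobNorm (PSi (V - Xstar)) ≤
      δ₃ * frobNorm (V - Xstar) + Real.sqrt (1 + δ₂) * ‖ε‖ :=
  admira_projected_component_bound_general δ₂ δ₃ A hRIP2 hRIP3 Xstar ε y hy PSi hPSi_idem hPSi_sa
    hPSi_rank Q hQ_rank hQ_PSi hQ_Xstar V hV_mem hV_min
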